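/- Let Z be a tail of a nodal curve C with k_Z ≥ 4. Then there do not exist Z-terminal tails W ∈ T²_{i,j} and W' ∈ T³_{i,j} such that Z ⊆ W ∧ W' and #(Term_{W'} ∩ Term_Z) = 2. -/

import Mathlib

open Set

/- Dual multigraph model of a nodal curve: vertices `V` are irreducible
components, edges `E` are nodes, with endpoint maps `s t : E → V`. -/

/-- The set of terminal points (edges of the cut) of a vertex subset `Z`. -/
def TermPts {V E : Type} (s t : E → V) (Z : Set V) : Set E :=
  {e | (s e ∈ Z ∧ t e ∉ Z) ∨ (t e ∈ Z ∧ s e ∉ Z)}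

/-- A subcurve is a nonempty proper subset of the components. -/
def Subcurve {V : Type} (Z : Set V) : Prop := Z.Nonempty ∧ Z ≠ Set.univ

/-- Connectivity of the induced sub-multigraph on `Z`. -/
def ConnOn {V E : Type} (s t : E → V) (Z : Set V) : Prop :=
  ∀ x ∈ Z, ∀ y ∈ Z,
    Relation.ReflTransGen
      (fun a b => a ∈ Z ∧ b ∈ Z ∧ ∃ e, (s e = a ∧ t e = b) ∨ (s e = b ∧ t e = a)) x y

/-- A tail is a subcurve with both sides connected. -/
def IsTail {V E : Type} (s t : E → V) (Z : Set V) : Prop :=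
  Subcurve Z ∧ ConnOn s t Z ∧ ConnOn s t Zᶜ

/-- `k_Z`, the number of terminal points of `Z`. -/
noncomputable def kcut {V E : Type} (s t : E → V) (Z : Set V) : ℕ :=
  (TermPts s t Z).ncard

/-- The pair `(Z, Z')` is free if the edge cuts are disjoint. -/
def FreePair {V E : Type} (s t : E → V) (Z Z' : Set V) : Prop :=
  TermPts s t Z ∩ TermPts s t Z' = ∅

/-- The pair `(Z, Z')` is perfect. -/
def PerfectPair {V : Type} (Z Z' : Set V) : Prop :=
  Z ⊆ Z' ∨ Z' ⊆ Z ∨ Zᶜ ⊆ Z' ∨ Z' ⊆ Zᶜ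
/-- `S²_{i,j}`: the 2-tails containing `vi, vj` and omitting `v1`. -/
def S2set {V E : Type} (s t : E → V) (v1 vi vj : V) : Set (Set V) :=
  {Z | IsTail s t Z ∧ kcut s t Z = 2 ∧ vi ∈ Z ∧ vj ∈ Z ∧ v1 ∉ Z}

/-- The levels of the inductive construction of the set of nested tails:
level `0` is `S` itself, and level `m+1` consists of the members `Z` of `S`
with `W_m ◁ Z`, where `W_m` is the intersection of the members of level `m`. -/
def Tlevel {V E : Type} (s t : E → V) (S : Set (Set V)) : ℕ → Set (Set V)
  | 0 => S
  | (m + 1) =>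
      {Z | Z ∈ S ∧ ⋂₀ Tlevel s t S m ⊂ Z ∧ FreePair s t (⋂₀ Tlevel s t S m) Z}

/-- The set of nested tails extracted from `S`: the tails `W_m = ⋂ (level m)`
for all `m` with level `m` nonempty. -/
def Tset {V E : Type} (s t : E → V) (S : Set (Set V)) : Set (Set V) :=
  {X | ∃ m, (Tlevel s t S m).Nonempty ∧ X = ⋂₀ Tlevel s t S m}

/-- `T²_{i,j}`, the set of nested 2-tails with respect to `(i, j)`. -/
def T2set {V E : Type} (s t : E → V) (v1 vi vj : V) : Set (Set V) :=
  Tset s t (S2set s t v1 vi vj)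

/-- `S³_{i,j}`: the `T²_{i,j}`-free 3-tails containing `vi, vj`, omitting `v1`. -/
def S3set {V E : Type} (s t : E → V) (v1 vi vj : V) : Set (Set V) :=
  {Z | IsTail s t Z ∧ kcut s t Z = 3 ∧ vi ∈ Z ∧ vj ∈ Z ∧ v1 ∉ Z ∧
        ∀ W ∈ T2set s t v1 vi vj, FreePair s t Z W}

/-- `T³_{i,j}`, the set of nested 3-tails with respect to `(i, j)`. -/
def T3set {V E : Type} (s t : E → V) (v1 vi vj : V) : Set (Set V) :=
  Tset s t (S3set s t v1 vi vj)

/-!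
Put `U = W ∩ W'`. As `W` and `W'` are free, every cut edge of `U` is an edge of `W` or of `W'`
leaving `U`, and a cut edge of `Z ⊆ U` lying in `Term_{W'}` (resp. `Term_W`) is such an edge of
`W` (resp. `W'`). Connectedness of `Wᶜ` (resp. `W'ᶜ`) supplies one more cut edge of `W'`
(resp. `W`), so there are at most two (resp. one) such edges, and all of them are cut edges of
`Z`. Hence `Term_U ⊆ Term_Z`; connectedness of `Zᶜ` then forces `U = Z`, and `k_Z ≤ 2 + 1`.

That the members of `T²` and `T³` are 2-tails and `T²`-free 3-tails comes from uncrossing: for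
crossing tails `A`, `B`, the cuts of `A ∩ B` and `A ∪ B` have at least two edges each and at
most `k_A + k_B` together.
-/

section

variable {V E : Type} {s t : E → V}

def TermPtsIn (s t : E → V) (B U : Set V) : Set E :=
  {e | e ∈ TermPts s t U ∧ s e ∈ B ∧ t e ∈ B}

lemma termPts_compl (Z : Set V) : TermPts s t Zᶜ = TermPts s t Z := by
  ext e; simp only [TermPts, mem_ofPred_eq, mem_compl_iff, not_not]; tauto

lemma kcut_compl (Z : Set V) : kcut s t Zᶜ = kcut s t Z := by
  rw [kcut, kcut, termPts_compl]

lemma freePair_comm {X Y : Set V} : FreePair s t X Y ↔ FreePair s t Y X := by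
  rw [FreePair, FreePair, inter_comm]

lemma termPts_inter_subset (X Y : Set V) :
    TermPts s t (X ∩ Y) ⊆ TermPts s t X ∪ TermPts s t Y := by
  intro e; simp only [TermPts, mem_ofPred_eq, mem_union, mem_inter_iff]; tauto

lemma termPts_union_subset (X Y : Set V) :
    TermPts s t (X ∪ Y) ⊆ TermPts s t X ∪ TermPts s t Y := by
  intro e; simp only [TermPts, mem_ofPred_eq, mem_union]; tauto

lemma exists_mem_termPts_of_mem_termPts_sInter {F : Set (Set V)} {e : E}
    (he : e ∈ TermPts s t (⋂₀ F)) : ∃ X ∈ F, e ∈ TermPts s t X := by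
  simp only [TermPts, mem_ofPred_eq, mem_sInter, not_forall] at he
  rcases he with ⟨hs, X, hX, ht⟩ | ⟨ht, X, hX, hs⟩
  · exact ⟨X, hX, Or.inl ⟨hs X hX, ht⟩⟩
  · exact ⟨X, hX, Or.inr ⟨ht X hX, hs⟩⟩

lemma freePair_of_termPts_subset {A B Y W : Set V}
    (h : TermPts s t Y ⊆ TermPts s t A ∪ TermPts s t B)
    (hA : FreePair s t A W) (hB : FreePair s t B W) : FreePair s t Y W := by
  refine eq_empty_of_forall_notMem fun e ⟨heY, heW⟩ => ?_
  rcases h heY with he | he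
  · exact eq_empty_iff_forall_notMem.1 hA e ⟨he, heW⟩
  · exact eq_empty_iff_forall_notMem.1 hB e ⟨he, heW⟩

lemma kcut_inter_add_kcut_union_le [Finite E] (X Y : Set V) :
    kcut s t (X ∩ Y) + kcut s t (X ∪ Y) ≤ kcut s t X + kcut s t Y := by
  have hunion : TermPts s t (X ∩ Y) ∪ TermPts s t (X ∪ Y) ⊆
      TermPts s t X ∪ TermPts s t Y := by
    intro e; simp only [TermPts, mem_ofPred_eq, mem_union, mem_inter_iff]; tauto
  have hinter : TermPts s t (X ∩ Y) ∩ TermPts s t (X ∪ Y) ⊆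
      TermPts s t X ∩ TermPts s t Y := by
    intro e; simp only [TermPts, mem_ofPred_eq, mem_union, mem_inter_iff]; tauto
  simp only [kcut]
  rw [← ncard_union_add_ncard_inter, ← ncard_union_add_ncard_inter (TermPts s t X)]
  exact add_le_add (ncard_le_ncard hunion) (ncard_le_ncard hinter)

lemma termPtsIn_subset_termPts (B U : Set V) : TermPtsIn s t B U ⊆ TermPts s t U :=
  fun _ he => he.1

lemma not_subset_of_mem_termPtsIn {B U : Set V} {e : E} (he : e ∈ TermPtsIn s t B U) :
    ¬ B ⊆ U := by
  rintro h
  rcases he with ⟨⟨-, ht⟩ | ⟨-, hs⟩, hsB, htB⟩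
  exacts [ht (h htB), hs (h hsB)]

lemma termPtsIn_inter_subset_right (X Y : Set V) :
    TermPtsIn s t X (X ∩ Y) ⊆ TermPts s t Y := by
  intro e; simp only [TermPtsIn, TermPts, mem_ofPred_eq, mem_inter_iff]; tauto

lemma disjoint_termPtsIn_inter (X Y : Set V) :
    Disjoint (TermPtsIn s t X (X ∩ Y)) (TermPtsIn s t Y (X ∩ Y)) := by
  refine disjoint_left.2 fun e he he' => ?_
  simp only [TermPtsIn, TermPts, mem_ofPred_eq, mem_inter_iff] at he he'
  tauto

lemma disjoint_termPtsIn_compl (X U U' : Set V) :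
    Disjoint (TermPtsIn s t X U) (TermPtsIn s t Xᶜ U') :=
  disjoint_left.2 fun _ he he' => he'.2.1 he.2.1

lemma termPts_inter_subset_termPtsIn {X Y : Set V} (h : FreePair s t X Y) :
    TermPts s t (X ∩ Y) ⊆ TermPtsIn s t X (X ∩ Y) ∪ TermPtsIn s t Y (X ∩ Y) := by
  intro e he
  have hXY := eq_empty_iff_forall_notMem.1 h e
  simp only [TermPtsIn, TermPts, mem_ofPred_eq, mem_union, mem_inter_iff] at he hXY ⊢
  tauto

lemma termPts_inter_subset_termPtsIn_of_subset {X Y Z : Set V} (hZ : Z ⊆ X ∩ Y)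
    (h : FreePair s t X Y) :
    TermPts s t Y ∩ TermPts s t Z ⊆ TermPtsIn s t X (X ∩ Y) := by
  intro e ⟨heY, heZ⟩
  have hXY := eq_empty_iff_forall_notMem.1 h e
  have hs := @hZ (s e)
  have ht := @hZ (t e)
  simp only [TermPtsIn, TermPts, mem_ofPred_eq, mem_inter_iff] at heY heZ hXY hs ht ⊢
  tauto

def AdjOn (s t : E → V) (Z : Set V) (a b : V) : Prop :=
  a ∈ Z ∧ b ∈ Z ∧ ∃ e, (s e = a ∧ t e = b) ∨ (s e = b ∧ t e = a)

lemma connOn_iff {Z : Set V} :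
    ConnOn s t Z ↔ ∀ x ∈ Z, ∀ y ∈ Z, Relation.ReflTransGen (AdjOn s t Z) x y := Iff.rfl

lemma adjOn_mono {A B : Set V} (h : A ⊆ B) : AdjOn s t A ≤ AdjOn s t B :=
  fun _ _ hab => ⟨h hab.1, h hab.2.1, hab.2.2⟩

lemma connOn_union {A B : Set V} {x : V} (hA : ConnOn s t A) (hB : ConnOn s t B)
    (hx : x ∈ A ∩ B) : ConnOn s t (A ∪ B) := by
  rw [connOn_iff] at hA hB ⊢
  have hA' : ∀ a ∈ A, ∀ b ∈ A, Relation.ReflTransGen (AdjOn s t (A ∪ B)) a b :=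
    fun a ha b hb => Relation.ReflTransGen.mono (adjOn_mono subset_union_left) _ _ (hA a ha b hb)
  have hB' : ∀ a ∈ B, ∀ b ∈ B, Relation.ReflTransGen (AdjOn s t (A ∪ B)) a b :=
    fun a ha b hb => Relation.ReflTransGen.mono (adjOn_mono subset_union_right) _ _ (hB a ha b hb)
  rintro a (ha | ha) b (hb | hb)
  · exact hA' a ha b hb
  · exact (hA' a ha x hx.1).trans (hB' x hx.2 b hb)
  · exact (hB' a ha x hx.2).trans (hA' x hx.1 b hb)
  · exact hB' a ha b hb

lemma termPtsIn_nonempty {B U : Set V} {x y : V} (hB : ConnOn s t B) (hxB : x ∈ B)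
    (hxU : x ∈ U) (hyB : y ∈ B) (hyU : y ∉ U) : (TermPtsIn s t B U).Nonempty := by
  induction hB x hxB y hyB using Relation.ReflTransGen.head_induction_on with
  | refl => exact absurd hxU hyU
  | @head a c hac _ ih =>
    by_cases hcU : c ∈ U
    · exact ih hac.2.1 hcU
    · obtain ⟨haB, hcB, e, ⟨rfl, rfl⟩ | ⟨rfl, rfl⟩⟩ := hac
      · exact ⟨e, Or.inl ⟨hxU, hcU⟩, haB, hcB⟩
      · exact ⟨e, Or.inr ⟨hxU, hcU⟩, hcB, haB⟩

lemma connOn_of_termPtsIn_subsingleton {B U : Set V} (hB : ConnOn s t B) (hUB : U ⊆ B)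
    (h : (TermPtsIn s t B U).Subsingleton) : ConnOn s t U := by
  classical
  rw [connOn_iff] at hB ⊢
  intro x hx y hy
  obtain ⟨u, hu, hcut⟩ : ∃ u ∈ U, ∀ e ∈ TermPtsIn s t B U, s e = u ∨ t e = u := by
    rcases h.eq_empty_or_singleton with h0 | ⟨e0, h0⟩
    · exact ⟨x, hx, by simp [h0]⟩
    · have he0 : e0 ∈ TermPtsIn s t B U := h0 ▸ rfl
      rcases he0.1 with ⟨hs, -⟩ | ⟨ht, -⟩
      · exact ⟨s e0, hs, by simp [h0]⟩
      · exact ⟨t e0, ht, by simp [h0]⟩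
  -- collapsing `B \ U` onto `u` turns paths in `B` into paths in `U`
  let f : V → V := fun v => if v ∈ U then v else u
  have hcross : ∀ a b e, a ∈ B → b ∈ B → a ∈ U → b ∉ U →
      (s e = a ∧ t e = b) ∨ (s e = b ∧ t e = a) → a = u := by
    rintro a b e haB hbB ha hb (⟨rfl, rfl⟩ | ⟨rfl, rfl⟩)
    · rcases hcut e ⟨Or.inl ⟨ha, hb⟩, haB, hbB⟩ with h | h
      exacts [h, absurd (h ▸ hu) hb]
    · rcases hcut e ⟨Or.inr ⟨ha, hb⟩, hbB, haB⟩ with h | h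
      exacts [absurd (h ▸ hu) hb, h]
  have hstep : ∀ a b, AdjOn s t B a b → Relation.ReflTransGen (AdjOn s t U) (f a) (f b) := by
    rintro a b ⟨haB, hbB, e, he⟩
    by_cases ha : a ∈ U <;> by_cases hb : b ∈ U <;> simp only [f, ha, hb, if_true, if_false]
    · exact .single ⟨ha, hb, e, he⟩
    · rw [hcross a b e haB hbB ha hb he]
    · rw [hcross b a e hbB haB hb ha he.symm]
    · exact .refl
  have hpath := Relation.ReflTransGen.lift' f hstep x y (hB x (hUB hx) y (hUB hy))
  simpa only [Function.onFun, f, hx, hy, if_true] using hpath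

lemma isTail_compl {Z : Set V} : IsTail s t Zᶜ ↔ IsTail s t Z := by
  simp only [IsTail, Subcurve, compl_compl, nonempty_compl, compl_ne_univ]
  tauto

lemma termPtsIn_inter_subset_left (X Y : Set V) :
    TermPtsIn s t Y (X ∩ Y) ⊆ TermPts s t X := by
  intro e; simp only [TermPtsIn, TermPts, mem_ofPred_eq, mem_inter_iff]; tauto

lemma termPtsIn_inter_nonempty {X Y : Set V} (hY : ConnOn s t Y) (hne : (X ∩ Y).Nonempty)
    (hYX : ¬ Y ⊆ X) : (TermPtsIn s t Y (X ∩ Y)).Nonempty := by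
  obtain ⟨x, hxX, hxY⟩ := hne
  obtain ⟨y, hyY, hyX⟩ := not_subset.1 hYX
  exact termPtsIn_nonempty hY hxY ⟨hxX, hxY⟩ hyY fun h => hyX h.1

lemma ncard_termPtsIn_add_le_kcut_inter [Finite E] (X Y : Set V) :
    (TermPtsIn s t X (X ∩ Y)).ncard + (TermPtsIn s t Y (X ∩ Y)).ncard ≤
      kcut s t (X ∩ Y) := by
  rw [← ncard_union_eq (disjoint_termPtsIn_inter X Y)]
  exact ncard_le_ncard
    (union_subset (termPtsIn_subset_termPts _ _) (termPtsIn_subset_termPts _ _))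

section Crossing

variable [Finite E] {X Y : Set V}

lemma one_le_ncard_termPtsIn_inter (hX : ConnOn s t X) (hY : ConnOn s t Y)
    (hne : (X ∩ Y).Nonempty) (hXY : ¬ X ⊆ Y) (hYX : ¬ Y ⊆ X) :
    1 ≤ (TermPtsIn s t X (X ∩ Y)).ncard ∧ 1 ≤ (TermPtsIn s t Y (X ∩ Y)).ncard := by
  have hX' := termPtsIn_inter_nonempty hX (inter_comm X Y ▸ hne) hXY
  rw [inter_comm Y X] at hX'
  exact ⟨(ncard_pos (toFinite _)).2 hX',
    (ncard_pos (toFinite _)).2 (termPtsIn_inter_nonempty hY hne hYX)⟩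

lemma two_le_kcut_inter (hX : ConnOn s t X) (hY : ConnOn s t Y) (hne : (X ∩ Y).Nonempty)
    (hXY : ¬ X ⊆ Y) (hYX : ¬ Y ⊆ X) : 2 ≤ kcut s t (X ∩ Y) := by
  have h := one_le_ncard_termPtsIn_inter hX hY hne hXY hYX
  have := ncard_termPtsIn_add_le_kcut_inter (s := s) (t := t) X Y
  omega

lemma two_le_kcut_union (hX : ConnOn s t Xᶜ) (hY : ConnOn s t Yᶜ)
    (hne : (Xᶜ ∩ Yᶜ).Nonempty) (hXY : ¬ X ⊆ Y) (hYX : ¬ Y ⊆ X) :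
    2 ≤ kcut s t (X ∪ Y) := by
  rw [← kcut_compl, compl_union]
  exact two_le_kcut_inter hX hY hne (by rwa [compl_subset_compl])
    (by rwa [compl_subset_compl])

lemma connOn_inter (hX : ConnOn s t X) (hY : ConnOn s t Y) (hne : (X ∩ Y).Nonempty)
    (hXY : ¬ X ⊆ Y) (hYX : ¬ Y ⊆ X) (hk : kcut s t (X ∩ Y) ≤ 3) :
    ConnOn s t (X ∩ Y) := by
  have h := one_le_ncard_termPtsIn_inter hX hY hne hXY hYX
  have := ncard_termPtsIn_add_le_kcut_inter (s := s) (t := t) X Y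
  by_cases hXone : (TermPtsIn s t X (X ∩ Y)).ncard ≤ 1
  · exact connOn_of_termPtsIn_subsingleton hX inter_subset_left
      (ncard_le_one_iff_subsingleton.1 hXone)
  · exact connOn_of_termPtsIn_subsingleton hY inter_subset_right
      (ncard_le_one_iff_subsingleton.1 (by omega))

lemma isTail_inter (hX : IsTail s t X) (hY : IsTail s t Y) (hne : (X ∩ Y).Nonempty)
    (hne' : (Xᶜ ∩ Yᶜ).Nonempty) (hXY : ¬ X ⊆ Y) (hYX : ¬ Y ⊆ X)
    (hk : kcut s t (X ∩ Y) ≤ 3) : IsTail s t (X ∩ Y) := by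
  obtain ⟨v, hvX, hvY⟩ := hne'
  refine ⟨⟨hne, fun h => hvX (h.symm ▸ mem_univ v : v ∈ X ∩ Y).1⟩,
    connOn_inter hX.2.1 hY.2.1 hne hXY hYX hk, ?_⟩
  rw [compl_inter]
  exact connOn_union hX.2.2 hY.2.2 ⟨hvX, hvY⟩

lemma isTail_union (hX : IsTail s t X) (hY : IsTail s t Y) (hne : (X ∩ Y).Nonempty)
    (hne' : (Xᶜ ∩ Yᶜ).Nonempty) (hXY : ¬ X ⊆ Y) (hYX : ¬ Y ⊆ X)
    (hk : kcut s t (X ∪ Y) ≤ 3) : IsTail s t (X ∪ Y) := by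
  rw [← isTail_compl, compl_union]
  refine isTail_inter (isTail_compl.2 hX) (isTail_compl.2 hY) hne' (by simpa only [compl_compl])
    (by rwa [compl_subset_compl]) (by rwa [compl_subset_compl]) ?_
  rwa [← compl_union, kcut_compl]

end Crossing

lemma not_freePair_inter {X Y : Set V} (hY : ConnOn s t Y) (hne : (X ∩ Y).Nonempty)
    (hYX : ¬ Y ⊆ X) : ¬ FreePair s t X (X ∩ Y) := fun h =>
  have ⟨e, he⟩ := termPtsIn_inter_nonempty hY hne hYX
  eq_empty_iff_forall_notMem.1 h e
    ⟨termPtsIn_inter_subset_left X Y he, termPtsIn_subset_termPts _ _ he⟩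

lemma not_freePair_union {X Y : Set V} (hY : ConnOn s t Yᶜ) (hne : (Xᶜ ∩ Yᶜ).Nonempty)
    (hXY : ¬ X ⊆ Y) : ¬ FreePair s t X (X ∪ Y) := by
  rw [FreePair, ← termPts_compl X, ← termPts_compl (X ∪ Y), compl_union]
  exact not_freePair_inter hY hne (by rwa [compl_subset_compl])

lemma Tlevel_subset (S : Set (Set V)) (m : ℕ) : Tlevel s t S m ⊆ S := by
  cases m with
  | zero => exact subset_rfl
  | succ m => exact fun _ hX => hX.1

lemma Tset_subset [Finite V] {S : Set (Set V)} (hS : InfClosed S) : Tset s t S ⊆ S := by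
  rintro _ ⟨m, hne, rfl⟩
  exact hS.sInf_mem_of_nonempty (toFinite _) hne (Tlevel_subset S m)

lemma termPts_nonempty_of_ssubset {W X : Set V} (hX : ConnOn s t X) (hW : W.Nonempty)
    (hWX : W ⊂ X) : (TermPts s t W).Nonempty := by
  obtain ⟨w, hw⟩ := hW
  obtain ⟨x, hxX, hxW⟩ := exists_of_ssubset hWX
  exact (termPtsIn_nonempty hX (hWX.1 hw) hw hxX hxW).mono (termPtsIn_subset_termPts X W)

/-- A cut edge of `W_m` would be a cut edge of some member of level `m + 1`, which is free
from `W_m`. -/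
lemma sInter_Tlevel_ssubset_succ {S : Set (Set V)} (hS : ∀ X ∈ S, ConnOn s t X) (m : ℕ)
    (hW : (⋂₀ Tlevel s t S m).Nonempty) (hne : (Tlevel s t S (m + 1)).Nonempty) :
    ⋂₀ Tlevel s t S m ⊂ ⋂₀ Tlevel s t S (m + 1) := by
  obtain ⟨X, hX⟩ := hne
  have hsub : ⋂₀ Tlevel s t S m ⊆ ⋂₀ Tlevel s t S (m + 1) :=
    subset_sInter fun Y hY => hY.2.1.1
  refine hsub.ssubset_of_ne fun heq => ?_
  obtain ⟨e, he⟩ := termPts_nonempty_of_ssubset (hS X hX.1) hW hX.2.1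
  obtain ⟨Y, hY, heY⟩ := exists_mem_termPts_of_mem_termPts_sInter (heq ▸ he)
  exact eq_empty_iff_forall_notMem.1 hY.2.2 e ⟨he, heY⟩

lemma mem_Tset_of_forall_freePair [Finite V] {S : Set (Set V)} {v : V} {I : Set V}
    (hS : ∀ X ∈ S, ConnOn s t X) (hv : ∀ X ∈ S, v ∈ X) (hI : I ∈ S)
    (hfree : ∀ W ∈ Tset s t S, FreePair s t W I) : I ∈ Tset s t S := by
  suffices key : ∀ W : Set V, ∀ m, (Tlevel s t S m).Nonempty → ⋂₀ Tlevel s t S m = W →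
      W ⊆ I → I ∈ Tset s t S from key _ 0 ⟨I, hI⟩ rfl (sInter_subset_of_mem hI)
  intro W
  induction W using WellFoundedGT.induction with
  | _ W ih =>
    rintro m hne rfl hWI
    rcases hWI.eq_or_ssubset with hWI | hWI
    · exact ⟨m, hne, hWI.symm⟩
    · have hIm : I ∈ Tlevel s t S (m + 1) := ⟨hI, hWI, hfree _ ⟨m, hne, rfl⟩⟩
      have hvW : v ∈ ⋂₀ Tlevel s t S m := fun X hX => hv X (Tlevel_subset S m hX)
      exact ih _ (sInter_Tlevel_ssubset_succ hS m ⟨v, hvW⟩ ⟨I, hIm⟩) (m + 1) ⟨I, hIm⟩ rfl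
        (sInter_subset_of_mem hIm)

lemma ncard_termPtsIn_lt_kcut [Finite E] {X Y : Set V} {v : V} (hX : ConnOn s t Xᶜ)
    (hvX : v ∉ X) (hvY : v ∉ Y) (hYX : ¬ Y ⊆ X) :
    (TermPtsIn s t X (X ∩ Y)).ncard < kcut s t Y := by
  obtain ⟨y, hyY, hyX⟩ := not_subset.1 hYX
  have hout : 0 < (TermPtsIn s t Xᶜ (Xᶜ ∩ Y)).ncard :=
    (ncard_pos (toFinite _)).2 (termPtsIn_nonempty hX hyX ⟨hyX, hyY⟩ hvX fun h => hvY h.2)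
  calc (TermPtsIn s t X (X ∩ Y)).ncard
      < (TermPtsIn s t X (X ∩ Y)).ncard + (TermPtsIn s t Xᶜ (Xᶜ ∩ Y)).ncard := by omega
    _ = (TermPtsIn s t X (X ∩ Y) ∪ TermPtsIn s t Xᶜ (Xᶜ ∩ Y)).ncard :=
      (ncard_union_eq (disjoint_termPtsIn_compl _ _ _)).symm
    _ ≤ kcut s t Y :=
      ncard_le_ncard (union_subset (termPtsIn_inter_subset_right _ _)
        (termPtsIn_inter_subset_right _ _))

lemma eq_of_termPts_subset {Z U : Set V} {v : V} (hZU : Z ⊆ U)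
    (hT : TermPts s t U ⊆ TermPts s t Z) (hZ : ConnOn s t Zᶜ) (hv : v ∉ U) : U = Z := by
  refine subset_antisymm (fun y hyU => ?_) hZU
  by_contra hyZ
  obtain ⟨e, heU, hsZ, htZ⟩ := termPtsIn_nonempty hZ hyZ hyU (fun h => hv (hZU h)) hv
  rcases hT heU with ⟨h, -⟩ | ⟨h, -⟩
  exacts [hsZ h, htZ h]

lemma kcut_le_three_of_subset_inter [Finite E] {Z W W' : Set V} {v : V}
    (hZc : ConnOn s t Zᶜ) (hWc : ConnOn s t Wᶜ) (hW'c : ConnOn s t W'ᶜ) (hvW : v ∉ W)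
    (hvW' : v ∉ W') (hkW : kcut s t W = 2) (hkW' : kcut s t W' = 3)
    (hfree : FreePair s t W W') (hZ : Z ⊆ W ∩ W')
    (hne : (TermPts s t W ∩ TermPts s t Z).Nonempty)
    (h2 : (TermPts s t W' ∩ TermPts s t Z).ncard = 2) : kcut s t Z ≤ 3 := by
  have hA : TermPts s t W' ∩ TermPts s t Z ⊆ TermPtsIn s t W (W ∩ W') :=
    termPts_inter_subset_termPtsIn_of_subset hZ hfree
  have hB : TermPts s t W ∩ TermPts s t Z ⊆ TermPtsIn s t W' (W ∩ W') := by
    rw [inter_comm W]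
    exact termPts_inter_subset_termPtsIn_of_subset (inter_comm W W' ▸ hZ)
      (freePair_comm.1 hfree)
  obtain ⟨e, he⟩ := hne
  obtain ⟨e', he'⟩ : (TermPts s t W' ∩ TermPts s t Z).Nonempty :=
    nonempty_of_ncard_ne_zero (by omega)
  have hW'W : ¬ W' ⊆ W := fun h => not_subset_of_mem_termPtsIn (hB he) (subset_inter h le_rfl)
  have hWW' : ¬ W ⊆ W' := fun h => not_subset_of_mem_termPtsIn (hA he') (subset_inter le_rfl h)
  have hIW : TermPtsIn s t W (W ∩ W') = TermPts s t W' ∩ TermPts s t Z := by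
    have := ncard_termPtsIn_lt_kcut hWc hvW hvW' hW'W
    exact (eq_of_subset_of_ncard_le hA (by omega)).symm
  have hIW' : TermPtsIn s t W' (W ∩ W') = TermPts s t W ∩ TermPts s t Z := by
    have := ncard_termPtsIn_lt_kcut hW'c hvW' hvW hWW'
    rw [inter_comm W'] at this
    exact (eq_of_subset_of_ncard_le hB
      ((by omega : _ ≤ 1).trans ((ncard_pos (toFinite _)).2 ⟨e, he⟩))).symm
  have hcut := termPts_inter_subset_termPtsIn hfree
  rw [hIW, hIW'] at hcut
  have hUZ : W ∩ W' = Z := eq_of_termPts_subset hZ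
    (hcut.trans (union_subset inter_subset_right inter_subset_right)) hZc fun h => hvW h.1
  have h1 : (TermPts s t W ∩ TermPts s t Z).ncard ≤ 1 := by
    have := ncard_termPtsIn_lt_kcut hW'c hvW' hvW hWW'
    rw [inter_comm W', hIW'] at this
    omega
  calc kcut s t Z = kcut s t (W ∩ W') := by rw [hUZ]
    _ ≤ (TermPts s t W' ∩ TermPts s t Z ∪ TermPts s t W ∩ TermPts s t Z).ncard :=
      ncard_le_ncard hcut
    _ ≤ 3 := (ncard_union_le _ _).trans (by omega)

lemma infClosed_of_crossing {S : Set (Set V)}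
    (h : ∀ A ∈ S, ∀ B ∈ S, ¬ A ⊆ B → ¬ B ⊆ A → A ∩ B ∈ S) : InfClosed S := by
  intro A hA B hB
  change A ∩ B ∈ S
  by_cases hAB : A ⊆ B
  · rwa [inter_eq_left.2 hAB]
  by_cases hBA : B ⊆ A
  · rwa [inter_eq_right.2 hBA]
  exact h A hA B hB hAB hBA

section NestedTails

variable {v1 vi vj : V}

lemma freePair_of_mem_S2set [Finite V] {A B Y : Set V}
    (hA : ∀ W ∈ T2set s t v1 vi vj, FreePair s t A W)
    (hB : ∀ W ∈ T2set s t v1 vi vj, FreePair s t B W) (hY : Y ∈ S2set s t v1 vi vj)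
    (hYAB : TermPts s t Y ⊆ TermPts s t A ∪ TermPts s t B) : FreePair s t A Y :=
  hA Y <| mem_Tset_of_forall_freePair (fun _ hX => hX.1.2.1) (fun _ hX => hX.2.2.1) hY
    fun W hW => freePair_comm.1 (freePair_of_termPts_subset hYAB (hA W hW) (hB W hW))

variable [Finite E]

lemma S2set_infClosed : InfClosed (S2set s t v1 vi vj) := by
  refine infClosed_of_crossing fun A hA B hB hAB hBA => ?_
  obtain ⟨hAt, hkA, hiA, hjA, h1A⟩ := hA
  obtain ⟨hBt, hkB, hiB, hjB, h1B⟩ := hB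
  have hne : (A ∩ B).Nonempty := ⟨vi, hiA, hiB⟩
  have hne' : (Aᶜ ∩ Bᶜ).Nonempty := ⟨v1, h1A, h1B⟩
  have := kcut_inter_add_kcut_union_le (s := s) (t := t) A B
  have := two_le_kcut_inter hAt.2.1 hBt.2.1 hne hAB hBA
  have := two_le_kcut_union hAt.2.2 hBt.2.2 hne' hAB hBA
  have hk : kcut s t (A ∩ B) = 2 := by omega
  exact ⟨isTail_inter hAt hBt hne hne' hAB hBA (by omega), hk, ⟨hiA, hiB⟩, ⟨hjA, hjB⟩,
    fun h => h1A h.1⟩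

lemma T2set_subset_S2set [Finite V] : T2set s t v1 vi vj ⊆ S2set s t v1 vi vj :=
  Tset_subset S2set_infClosed

/-- Of two crossing members of `S³`, neither the intersection nor the union can be a 2-tail:
it would be free from `T²`, hence belong to `T²`, yet it shares a cut edge with both. Since
the cut sizes of intersection and union add up to at most `6`, the intersection is a 3-tail. -/
lemma S3set_infClosed [Finite V] : InfClosed (S3set s t v1 vi vj) := by
  refine infClosed_of_crossing fun A hA B hB hAB hBA => ?_
  obtain ⟨hAt, hkA, hiA, hjA, h1A, hAf⟩ := hA
  obtain ⟨hBt, hkB, hiB, hjB, h1B, hBf⟩ := hB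
  have hne : (A ∩ B).Nonempty := ⟨vi, hiA, hiB⟩
  have hne' : (Aᶜ ∩ Bᶜ).Nonempty := ⟨v1, h1A, h1B⟩
  have := kcut_inter_add_kcut_union_le (s := s) (t := t) A B
  have := two_le_kcut_inter hAt.2.1 hBt.2.1 hne hAB hBA
  have := two_le_kcut_union hAt.2.2 hBt.2.2 hne' hAB hBA
  have hI : kcut s t (A ∩ B) ≠ 2 := fun hk =>
    not_freePair_inter hBt.2.1 hne hBA <| freePair_of_mem_S2set hAf hBf
      ⟨isTail_inter hAt hBt hne hne' hAB hBA (by omega), hk, ⟨hiA, hiB⟩, ⟨hjA, hjB⟩,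
        fun h => h1A h.1⟩
      (termPts_inter_subset A B)
  have hU : kcut s t (A ∪ B) ≠ 2 := fun hk =>
    not_freePair_union hBt.2.2 hne' hAB <| freePair_of_mem_S2set hAf hBf
      ⟨isTail_union hAt hBt hne hne' hAB hBA (by omega), hk, Or.inl hiA, Or.inl hjA,
        fun h => h.elim h1A h1B⟩
      (termPts_union_subset A B)
  have hk : kcut s t (A ∩ B) = 3 := by omega
  exact ⟨isTail_inter hAt hBt hne hne' hAB hBA hk.le, hk, ⟨hiA, hiB⟩, ⟨hjA, hjB⟩,
    fun h => h1A h.1,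
    fun W hW => freePair_of_termPts_subset (termPts_inter_subset A B) (hAf W hW) (hBf W hW)⟩

lemma T3set_subset_S3set [Finite V] : T3set s t v1 vi vj ⊆ S3set s t v1 vi vj :=
  Tset_subset S3set_infClosed

end NestedTails

end

theorem stmt_15_general {V E : Type} [Fintype V] [Fintype E] (s t : E → V)
    (v1 vi vj : V) (Z : Set V)
    (hZ : IsTail s t Z) (hk : 4 ≤ kcut s t Z) :
    ¬ ∃ W ∈ T2set s t v1 vi vj, ∃ W' ∈ T3set s t v1 vi vj,
        TermPts s t W ∩ TermPts s t Z ≠ ∅ ∧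
        TermPts s t W' ∩ TermPts s t Z ≠ ∅ ∧
        Z ⊆ W ∩ W' ∧
        (TermPts s t W' ∩ TermPts s t Z).ncard = 2 := by
  rintro ⟨W, hW, W', hW', hWZ, -, hZW, h2⟩
  obtain ⟨⟨-, -, hWc⟩, hkW, -, -, hv1W⟩ := T2set_subset_S2set hW
  obtain ⟨⟨-, -, hW'c⟩, hkW', -, -, hv1W', hW'free⟩ := T3set_subset_S3set hW'
  have := kcut_le_three_of_subset_inter hZ.2.2 hWc hW'c hv1W hv1W' hkW hkW'
    (freePair_comm.1 (hW'free W hW)) hZW (nonempty_iff_ne_empty.2 hWZ) h2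
  omega

/-- Lemma 5.2: for a tail `Z` with `k_Z ≥ 4`, there are no `Z`-terminal tails
`W ∈ T²_{i,j}` and `W' ∈ T³_{i,j}` with `Z ⊆ W ∧ W'` and
`#(Term_{W'} ∩ Term_Z) = 2`. -/
theorem stmt_15 {V E : Type} [Fintype V] [Fintype E] (s t : E → V)
    (hC : ConnOn s t Set.univ) (v1 vi vj : V) (Z : Set V)
    (hZ : IsTail s t Z) (hk : 4 ≤ kcut s t Z) :
    ¬ ∃ W ∈ T2set s t v1 vi vj, ∃ W' ∈ T3set s t v1 vi vj,
        TermPts s t W ∩ TermPts s t Z ≠ ∅ ∧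
        TermPts s t W' ∩ TermPts s t Z ≠ ∅ ∧
        Z ⊆ W ∩ W' ∧
        (TermPts s t W' ∩ TermPts s t Z).ncard = 2 :=
  stmt_15_general s t v1 vi vj Z hZ hk
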